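/- Let ω = e^{2πi/3} and ζ = e^{2πi/9} in ℂ, and let A = [[0,0,1],[ω,0,0],[0,1,0]], B = [[0,1,0],[0,0,1],[ω,0,0]], C = [[ω+1,0,−ω],[0,0,ω],[ω+1,ω,ω²]] in GL₃(ℂ). Then the assignments a ↦ [A], b ↦ [B], c ↦ [C] of the classes of these matrices in PGL₃(ℂ) extend to a group homomorphism ρ : G₀^{18,18,18} → PGL₃(ℂ), and the range of ρ is infinite. Moreover, with T = [[2ζ⁴+ζ³+ζ−1, 2ζ⁴+ζ³+ζ−1, −ζ⁴+ζ³+ζ+2],[−ζ⁴−2ζ³−2ζ−1, −ζ⁴+ζ³+ζ+2, 2ζ⁴+ζ³+ζ−1],[2ζ⁴+ζ³+ζ−1, 2ζ⁴+ζ³+ζ−1, −ζ⁴−2ζ³−2ζ−1]], the additional assignment t ↦ [T] extends ρ to a group homomorphism into PGL₃(ℂ) from the group presented by generators t, a, b, c and relators t³, a³, b³, c³, (ba)³, (ba⁻¹)³, (cb)³, (cb⁻¹)³, (ac)³, (ac⁻¹)³, t a t⁻¹ b⁻¹, t b t⁻¹ c⁻¹. -/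

import Mathlib

/-- The projective general linear group PGL₃(ℂ). -/
abbrev PGL3C : Type :=
  Matrix.GeneralLinearGroup (Fin 3) ℂ ⧸ Subgroup.center (Matrix.GeneralLinearGroup (Fin 3) ℂ)

/-- The relators of the trivalent triangle group G₀^{18,18,18}:
a³, b³, c³, (ba)³, (ba⁻¹)³, (cb)³, (cb⁻¹)³, (ac)³, (ac⁻¹)³. -/
def g18Rels : Set (FreeGroup (Fin 3)) :=
  let a : FreeGroup (Fin 3) := FreeGroup.of 0
  let b : FreeGroup (Fin 3) := FreeGroup.of 1
  let c : FreeGroup (Fin 3) := FreeGroup.of 2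
  {a ^ 3, b ^ 3, c ^ 3, (b * a) ^ 3, (b * a⁻¹) ^ 3, (c * b) ^ 3, (c * b⁻¹) ^ 3,
   (a * c) ^ 3, (a * c⁻¹) ^ 3}

/-- The relators of the extension G̃₀^{18,18,18} = ⟨t, a, b, c ∣ t³, a³, b³, c³, (ba)³,
(ba⁻¹)³, (cb)³, (cb⁻¹)³, (ac)³, (ac⁻¹)³, tat⁻¹b⁻¹, tbt⁻¹c⁻¹⟩
(generators t, a, b, c are indexed by 0, 1, 2, 3). -/
def g18ExtRels : Set (FreeGroup (Fin 4)) :=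
  let t : FreeGroup (Fin 4) := FreeGroup.of 0
  let a : FreeGroup (Fin 4) := FreeGroup.of 1
  let b : FreeGroup (Fin 4) := FreeGroup.of 2
  let c : FreeGroup (Fin 4) := FreeGroup.of 3
  {t ^ 3, a ^ 3, b ^ 3, c ^ 3, (b * a) ^ 3, (b * a⁻¹) ^ 3, (c * b) ^ 3, (c * b⁻¹) ^ 3,
   (a * c) ^ 3, (a * c⁻¹) ^ 3, t * a * t⁻¹ * b⁻¹, t * b * t⁻¹ * c⁻¹}

noncomputable def ωc : ℂ := Complex.exp (2 * Real.pi * Complex.I / 3)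

noncomputable def ζc : ℂ := Complex.exp (2 * Real.pi * Complex.I / 9)

/-- The matrix A. -/
noncomputable def matA : Matrix (Fin 3) (Fin 3) ℂ :=
  !![0, 0, 1; ωc, 0, 0; 0, 1, 0]

/-- The matrix B. -/
noncomputable def matB : Matrix (Fin 3) (Fin 3) ℂ :=
  !![0, 1, 0; 0, 0, 1; ωc, 0, 0]

/-- The matrix C. -/
noncomputable def matC : Matrix (Fin 3) (Fin 3) ℂ :=
  !![ωc + 1, 0, -ωc; 0, 0, ωc; ωc + 1, ωc, ωc ^ 2]

/-- The matrix T. -/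
noncomputable def matT : Matrix (Fin 3) (Fin 3) ℂ :=
  !![2 * ζc ^ 4 + ζc ^ 3 + ζc - 1, 2 * ζc ^ 4 + ζc ^ 3 + ζc - 1,
       -ζc ^ 4 + ζc ^ 3 + ζc + 2;
     -ζc ^ 4 - 2 * ζc ^ 3 - 2 * ζc - 1, -ζc ^ 4 + ζc ^ 3 + ζc + 2,
       2 * ζc ^ 4 + ζc ^ 3 + ζc - 1;
     2 * ζc ^ 4 + ζc ^ 3 + ζc - 1, 2 * ζc ^ 4 + ζc ^ 3 + ζc - 1,
       -ζc ^ 4 - 2 * ζc ^ 3 - 2 * ζc - 1]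

/-!
The relations are polynomial identities between 3 × 3 matrices over `ℚ(ζ)`, checked entrywise
modulo `ω² + ω + 1 = 0` and `ω = ζ³`. Only `a³ = (ba)³ = (ba⁻¹)³ = 1` need such a check:
`TA = BT`, `TB = CT` and `[T]³ = 1`, so conjugation by `[T]` permutes `[A], [B], [C]` cyclically
and carries these three relations to the other six.

The image is infinite because `ABC²` has determinant `ω`, of norm one, but an eigenvalue `ωy`
with `y² + ωy + 1 = 0`, which lies off the unit circle since `ω` is not real. If some power
`(ABC²)ᵏ` were a scalar `s`, the determinant would force `|s| = 1` and the eigenvector would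
force `s = (ωy)ᵏ`.
-/

open Matrix

namespace Matrix.GeneralLinearGroup

variable {n : Type*} [Fintype n] [DecidableEq n]

theorem mk_pow_eq_one_of_val_pow_eq_smul_one {R : Type*} [CommRing R]
    {g : GL n R} {k : ℕ} {s : R} (h : (g : Matrix n n R) ^ k = s • 1) :
    (g : GL n R ⧸ Subgroup.center (GL n R)) ^ k = 1 := by
  rw [← QuotientGroup.mk_pow, QuotientGroup.eq_one_iff,
    mem_center_iff_val_mem_range_scalar, Units.val_pow_eq_pow_val, h]
  exact ⟨s, (smul_one_eq_diagonal s).symm⟩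

theorem mk_conj_eq_of_val_mul_eq {R : Type*} [CommRing R] {t a b : GL n R}
    (h : (t : Matrix n n R) * a = b * t) :
    (QuotientGroup.mk t * QuotientGroup.mk a * (QuotientGroup.mk t)⁻¹ :
      GL n R ⧸ Subgroup.center (GL n R)) = QuotientGroup.mk b := by
  rw [mul_inv_eq_iff_eq_mul, ← QuotientGroup.mk_mul, ← QuotientGroup.mk_mul,
    show t * a = b * t from Units.ext (by simpa only [Units.val_mul] using h)]

theorem norm_pow_card_eq_norm_det_of_isOfFinOrder {K : Type*} [NormedField K] {g : GL n K}
    (hg : IsOfFinOrder (g : GL n K ⧸ Subgroup.center (GL n K))) {μ : K} {v : n → K}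
    (hv : v ≠ 0) (hμ : (g : Matrix n n K) *ᵥ v = μ • v) :
    ‖μ‖ ^ Fintype.card n = ‖(g : Matrix n n K).det‖ := by
  obtain ⟨k, hk, hgk⟩ := hg.exists_pow_eq_one
  rw [← QuotientGroup.mk_pow, QuotientGroup.eq_one_iff,
    mem_center_iff_val_mem_range_scalar, Units.val_pow_eq_pow_val] at hgk
  obtain ⟨s, hs⟩ := hgk
  rw [scalar_apply, ← smul_one_eq_diagonal] at hs
  have hdet : s ^ Fintype.card n = (g : Matrix n n K).det ^ k := by
    simpa [Matrix.det_smul, Matrix.det_pow] using congrArg Matrix.det hs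
  have hpow : ∀ m : ℕ, (g : Matrix n n K) ^ m *ᵥ v = μ ^ m • v := by
    intro m
    induction m with
    | zero => simp
    | succ m ih => rw [pow_succ, ← mulVec_mulVec, hμ, mulVec_smul, ih, smul_smul, pow_succ']
  have hμs : μ ^ k = s := smul_left_injective K hv <| by
    simp only [← hpow, ← hs, smul_mulVec, one_mulVec]
  refine (pow_left_inj₀ (by positivity) (norm_nonneg _) hk.ne').mp ?_
  rw [← pow_mul, mul_comm, pow_mul, ← norm_pow, hμs, ← norm_pow, hdet, norm_pow]

end Matrix.GeneralLinearGroup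

theorem Complex.norm_ne_one_of_sq_add_mul_add_one_eq_zero {y z : ℂ} (hz : z.im ≠ 0)
    (hy : y ^ 2 + z * y + 1 = 0) : ‖y‖ ≠ 1 := by
  intro hy1
  have hy0 : y ≠ 0 := by rintro rfl; simp at hy1
  have hconj : y * (starRingEnd ℂ) y = 1 := by
    rw [Complex.mul_conj, Complex.normSq_eq_norm_sq, hy1]; norm_num
  -- `y + z + ȳ = 0` exhibits `z` as real
  have hsum : y * (y + z + (starRingEnd ℂ) y) = 0 := by linear_combination hy + hconj
  have hz' : z = -(y + (starRingEnd ℂ) y) := by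
    linear_combination (mul_eq_zero.mp hsum).resolve_left hy0
  apply hz
  simp [hz']

section Relations

variable {G : Type*} [Group G]

structure G18Relations (a b c : G) : Prop where
  pow_a : a ^ 3 = 1
  pow_b : b ^ 3 = 1
  pow_c : c ^ 3 = 1
  pow_ba : (b * a) ^ 3 = 1
  pow_ba_inv : (b * a⁻¹) ^ 3 = 1
  pow_cb : (c * b) ^ 3 = 1
  pow_cb_inv : (c * b⁻¹) ^ 3 = 1
  pow_ac : (a * c) ^ 3 = 1
  pow_ac_inv : (a * c⁻¹) ^ 3 = 1

namespace G18Relations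

variable {t a b c : G}

theorem of_conj (ht : t ^ 3 = 1) (hta : t * a * t⁻¹ = b) (htb : t * b * t⁻¹ = c)
    (ha : a ^ 3 = 1) (hba : (b * a) ^ 3 = 1) (hba' : (b * a⁻¹) ^ 3 = 1) :
    G18Relations a b c := by
  have htc : t * c * t⁻¹ = a := by
    calc t * c * t⁻¹ = t * t * t * a * (t * t * t)⁻¹ := by rw [← htb, ← hta]; group
      _ = a := by rw [← pow_three', ht, one_mul, inv_one, mul_one]
  obtain ⟨φ, hφa, hφb, hφc⟩ : ∃ φ : G ≃* G, φ a = b ∧ φ b = c ∧ φ c = a :=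
    ⟨MulAut.conj t, hta, htb, htc⟩
  have hcb : (c * b) ^ 3 = 1 := by simpa [hφa, hφb] using congrArg φ hba
  have hcb' : (c * b⁻¹) ^ 3 = 1 := by simpa [hφa, hφb] using congrArg φ hba'
  have hb : b ^ 3 = 1 := by simpa [hφa] using congrArg φ ha
  exact ⟨ha, hb, by simpa [hφb] using congrArg φ hb, hba, hba', hcb, hcb',
    by simpa [hφb, hφc] using congrArg φ hcb, by simpa [hφb, hφc] using congrArg φ hcb'⟩

theorem lift_g18Rels_eq_one (h : G18Relations a b c) :
    ∀ r ∈ g18Rels, FreeGroup.lift ![a, b, c] r = 1 := by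
  intro r hr
  simp only [g18Rels, Set.mem_insert_iff, Set.mem_singleton_iff] at hr
  rcases h with ⟨ha, hb, hc, hba, hba', hcb, hcb', hac, hac'⟩
  rcases hr with rfl | rfl | rfl | rfl | rfl | rfl | rfl | rfl | rfl <;> simpa

theorem lift_g18ExtRels_eq_one (h : G18Relations a b c) (ht : t ^ 3 = 1) (hta : t * a * t⁻¹ = b)
    (htb : t * b * t⁻¹ = c) : ∀ r ∈ g18ExtRels, FreeGroup.lift ![t, a, b, c] r = 1 := by
  intro r hr
  simp only [g18ExtRels, Set.mem_insert_iff, Set.mem_singleton_iff] at hr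
  rcases h with ⟨ha, hb, hc, hba, hba', hcb, hcb', hac, hac'⟩
  rcases hr with rfl | rfl | rfl | rfl | rfl | rfl | rfl | rfl | rfl | rfl | rfl | rfl <;>
    simpa [mul_inv_eq_one]

end G18Relations

end Relations

section RootsOfUnity

theorem isPrimitiveRoot_ωc : IsPrimitiveRoot ωc 3 := by
  simpa [ωc] using Complex.isPrimitiveRoot_exp 3 (by norm_num)

theorem ωc_sq_add_ωc_add_one : ωc ^ 2 + ωc + 1 = 0 := by
  linear_combination (by simpa [Finset.sum_range_succ] using
    isPrimitiveRoot_ωc.geom_sum_eq_zero (by norm_num) : 1 + ωc + ωc ^ 2 = 0)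

theorem norm_ωc : ‖ωc‖ = 1 := isPrimitiveRoot_ωc.norm'_eq_one (by norm_num)

theorem ωc_ne_zero : ωc ≠ 0 := isPrimitiveRoot_ωc.ne_zero (by norm_num)

theorem ωc_im_ne_zero : ωc.im ≠ 0 := by
  intro him
  have hre := congrArg Complex.re ωc_sq_add_ωc_add_one
  simp only [pow_two, Complex.add_re, Complex.mul_re, him, mul_zero, sub_zero, Complex.one_re,
    Complex.zero_re] at hre
  nlinarith [sq_nonneg (ωc.re + 1 / 2)]

theorem ωc_eq_ζc_pow_three : ωc = ζc ^ 3 := by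
  rw [ωc, ζc, ← Complex.exp_nat_mul]
  congr 1
  push_cast
  ring

theorem ζc_pow_six_add_ζc_pow_three_add_one : ζc ^ 6 + ζc ^ 3 + 1 = 0 := by
  simpa [ωc_eq_ζc_pow_three, ← pow_mul] using ωc_sq_add_ωc_add_one

end RootsOfUnity

section MatrixIdentities

theorem det_matA : matA.det = ωc := by
  simp only [matA, det_fin_three, of_apply, cons_val_zero, cons_val_one, cons_val_two, head_cons,
    tail_cons]
  ring

theorem det_matB : matB.det = ωc := by
  simp only [matB, det_fin_three, of_apply, cons_val_zero, cons_val_one, cons_val_two, head_cons,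
    tail_cons]
  ring

theorem det_matC : matC.det = ωc := by
  simp only [matC, det_fin_three, of_apply, cons_val_zero, cons_val_one, cons_val_two, head_cons,
    tail_cons]
  linear_combination -ωc * ωc_sq_add_ωc_add_one

theorem det_matT : matT.det = 27 * (1 + 2 * ζc + ζc ^ 2 + ζc ^ 3 + ζc ^ 4 - ζc ^ 5) := by
  have := ζc_pow_six_add_ζc_pow_three_add_one
  simp only [matT, det_fin_three, of_apply, cons_val_zero, cons_val_one, cons_val_two, head_cons,
    tail_cons]
  grind

theorem det_matT_ne_zero : matT.det ≠ 0 := by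
  have := ζc_pow_six_add_ζc_pow_three_add_one
  refine left_ne_zero_of_mul_eq_one
    (b := (-2 * ζc - ζc ^ 2 + 2 * ζc ^ 3 - ζc ^ 4 - 2 * ζc ^ 5) / 27) ?_
  rw [det_matT]
  grind

theorem matA_pow_three : matA ^ 3 = ωc • 1 := by
  simp only [matA, pow_succ, pow_zero, one_mul, mul_fin_three, one_fin_three, smul_of, smul_cons,
    smul_eq_mul, smul_empty, EmbeddingLike.apply_eq_iff_eq, vecCons_inj, and_true]
  grind

theorem matB_mul_matA_pow_three : (matB * matA) ^ 3 = 1 := by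
  have := ωc_sq_add_ωc_add_one
  simp only [matA, matB, pow_succ, pow_zero, one_mul, mul_fin_three, one_fin_three,
    EmbeddingLike.apply_eq_iff_eq, vecCons_inj, and_true]
  grind

theorem matB_mul_matA_sq_pow_three : (matB * matA ^ 2) ^ 3 = 1 := by
  have := ωc_sq_add_ωc_add_one
  simp only [matA, matB, pow_succ, pow_zero, one_mul, mul_fin_three, one_fin_three,
    EmbeddingLike.apply_eq_iff_eq, vecCons_inj, and_true]
  grind

theorem matT_pow_three : matT ^ 3 = matT.det • 1 := by
  have := ζc_pow_six_add_ζc_pow_three_add_one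
  rw [det_matT]
  simp only [matT, pow_succ, pow_zero, one_mul, mul_fin_three, one_fin_three, smul_of, smul_cons,
    smul_eq_mul, smul_empty, EmbeddingLike.apply_eq_iff_eq, vecCons_inj, and_true]
  grind

theorem matT_mul_matA : matT * matA = matB * matT := by
  have := ζc_pow_six_add_ζc_pow_three_add_one
  simp only [matT, matA, matB, ωc_eq_ζc_pow_three, mul_fin_three, EmbeddingLike.apply_eq_iff_eq,
    vecCons_inj, and_true]
  grind

theorem matT_mul_matB : matT * matB = matC * matT := by
  have := ζc_pow_six_add_ζc_pow_three_add_one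
  simp only [matT, matB, matC, ωc_eq_ζc_pow_three, mul_fin_three, EmbeddingLike.apply_eq_iff_eq,
    vecCons_inj, and_true]
  grind

-- `X³ - (1 + 2ω)X - ω` is the characteristic polynomial of `ABC²`.
theorem matA_mul_matB_mul_matC_sq_mulVec {μ : ℂ} (hμ : μ ^ 3 = (1 + 2 * ωc) * μ + ωc) :
    (matA * matB * matC ^ 2) *ᵥ ![-μ, μ + μ ^ 2, 1 + μ] = μ • ![-μ, μ + μ ^ 2, 1 + μ] := by
  have := ωc_sq_add_ωc_add_one
  simp only [matA, matB, matC, pow_succ, pow_zero, one_mul, mul_fin_three, cons_mulVec,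
    vec3_dotProduct', empty_mulVec, smul_cons, smul_eq_mul, smul_empty, vecCons_inj, and_true]
  grind

end MatrixIdentities

noncomputable def glA : GL (Fin 3) ℂ :=
  .mkOfDetNeZero matA (det_matA ▸ ωc_ne_zero)

noncomputable def glB : GL (Fin 3) ℂ :=
  .mkOfDetNeZero matB (det_matB ▸ ωc_ne_zero)

noncomputable def glC : GL (Fin 3) ℂ :=
  .mkOfDetNeZero matC (det_matC ▸ ωc_ne_zero)

noncomputable def glT : GL (Fin 3) ℂ :=
  .mkOfDetNeZero matT det_matT_ne_zero

@[simp] theorem val_glA : (glA : Matrix (Fin 3) (Fin 3) ℂ) = matA := rfl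

@[simp] theorem val_glB : (glB : Matrix (Fin 3) (Fin 3) ℂ) = matB := rfl

@[simp] theorem val_glC : (glC : Matrix (Fin 3) (Fin 3) ℂ) = matC := rfl

@[simp] theorem val_glT : (glT : Matrix (Fin 3) (Fin 3) ℂ) = matT := rfl

theorem mk_glT_pow_three : (glT : PGL3C) ^ 3 = 1 :=
  GeneralLinearGroup.mk_pow_eq_one_of_val_pow_eq_smul_one matT_pow_three

theorem mk_glT_conj_glA : (glT : PGL3C) * glA * (glT : PGL3C)⁻¹ = glB :=
  GeneralLinearGroup.mk_conj_eq_of_val_mul_eq matT_mul_matA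

theorem mk_glT_conj_glB : (glT : PGL3C) * glB * (glT : PGL3C)⁻¹ = glC :=
  GeneralLinearGroup.mk_conj_eq_of_val_mul_eq matT_mul_matB

theorem g18Relations_mk : G18Relations (glA : PGL3C) glB glC := by
  have hA : (glA : PGL3C) ^ 3 = 1 :=
    GeneralLinearGroup.mk_pow_eq_one_of_val_pow_eq_smul_one matA_pow_three
  refine .of_conj mk_glT_pow_three mk_glT_conj_glA mk_glT_conj_glB hA
    (GeneralLinearGroup.mk_pow_eq_one_of_val_pow_eq_smul_one (g := glB * glA) (s := 1)
      (by simpa using matB_mul_matA_pow_three)) ?_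
  rw [inv_eq_of_mul_eq_one_right (by rwa [← pow_succ'] : (glA : PGL3C) * glA ^ 2 = 1)]
  exact GeneralLinearGroup.mk_pow_eq_one_of_val_pow_eq_smul_one (g := glB * glA ^ 2) (s := 1)
    (by simpa using matB_mul_matA_sq_pow_three)

theorem not_isOfFinOrder_mk_glA_mul_glB_mul_glC_sq :
    ¬ IsOfFinOrder ((glA : PGL3C) * glB * glC ^ 2) := by
  intro hfin
  obtain ⟨d, hd⟩ := IsAlgClosed.exists_eq_mul_self (discrim 1 ωc 1)
  obtain ⟨y, hy⟩ := exists_quadratic_eq_zero one_ne_zero ⟨d, hd⟩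
  have hμ : (ωc * y) ^ 3 = (1 + 2 * ωc) * (ωc * y) + ωc := by
    linear_combination (y - ωc) * hy + ((ωc - 1) * y ^ 3 - y) * ωc_sq_add_ωc_add_one
  have hv : ![-(ωc * y), ωc * y + (ωc * y) ^ 2, 1 + ωc * y] ≠ 0 := by
    intro h0
    have h0' := congrFun h0 0
    have h2 := congrFun h0 2
    simp only [cons_val_zero, cons_val_two, Nat.succ_eq_add_one, Nat.reduceAdd, tail_cons,
      head_cons, Pi.zero_apply] at h0' h2
    exact one_ne_zero (by linear_combination h2 + h0' : (1 : ℂ) = 0)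
  have hnorm := GeneralLinearGroup.norm_pow_card_eq_norm_det_of_isOfFinOrder
    (g := glA * glB * glC ^ 2) hfin hv (by simpa using matA_mul_matB_mul_matC_sq_mulVec hμ)
  simp only [Units.val_mul, Units.val_pow_eq_pow_val, val_glA, val_glB, val_glC, det_mul, det_pow,
    det_matA, det_matB, det_matC, norm_mul, norm_pow, norm_ωc, one_pow, mul_one, one_mul,
    Fintype.card_fin] at hnorm
  exact Complex.norm_ne_one_of_sq_add_mul_add_one_eq_zero ωc_im_ne_zero (by linear_combination hy)
    ((pow_eq_one_iff_of_nonneg (norm_nonneg y) (by norm_num)).mp hnorm)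

/-- The assignments a ↦ [A], b ↦ [B], c ↦ [C] extend to a homomorphism
ρ : G₀^{18,18,18} → PGL₃(ℂ) with infinite image; moreover the additional assignment
t ↦ [T] extends ρ to a homomorphism of the extended group G̃₀^{18,18,18} into PGL₃(ℂ). -/
theorem g18_rep_PGL3 :
    ∃ A' B' C' T' : Matrix.GeneralLinearGroup (Fin 3) ℂ,
      (↑A' : Matrix (Fin 3) (Fin 3) ℂ) = matA ∧
      (↑B' : Matrix (Fin 3) (Fin 3) ℂ) = matB ∧
      (↑C' : Matrix (Fin 3) (Fin 3) ℂ) = matC ∧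
      (↑T' : Matrix (Fin 3) (Fin 3) ℂ) = matT ∧
      (∃ ρ : PresentedGroup g18Rels →* PGL3C,
        ρ (PresentedGroup.of 0) = QuotientGroup.mk A' ∧
        ρ (PresentedGroup.of 1) = QuotientGroup.mk B' ∧
        ρ (PresentedGroup.of 2) = QuotientGroup.mk C' ∧
        Set.Infinite (Set.range ρ)) ∧
      (∃ ρ' : PresentedGroup g18ExtRels →* PGL3C,
        ρ' (PresentedGroup.of 0) = QuotientGroup.mk T' ∧
        ρ' (PresentedGroup.of 1) = QuotientGroup.mk A' ∧
        ρ' (PresentedGroup.of 2) = QuotientGroup.mk B' ∧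
        ρ' (PresentedGroup.of 3) = QuotientGroup.mk C') := by
  refine ⟨glA, glB, glC, glT, rfl, rfl, rfl, rfl, ?_, ?_⟩
  · set ρ := PresentedGroup.toGroup g18Relations_mk.lift_g18Rels_eq_one
    have hρ (i : Fin 3) : ρ (.of i) = ![(glA : PGL3C), glB, glC] i := PresentedGroup.toGroup.of _
    refine ⟨ρ, hρ 0, hρ 1, hρ 2, ?_⟩
    have hN : ρ (.of 0 * .of 1 * .of 2 ^ 2) = glA * glB * glC ^ 2 := by
      simp [hρ]
    refine Set.infinite_of_injective_forall_mem
      (injective_pow_iff_not_isOfFinOrder.mpr not_isOfFinOrder_mk_glA_mul_glB_mul_glC_sq)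
      fun k ↦ ⟨(.of 0 * .of 1 * .of 2 ^ 2) ^ k, by rw [map_pow, hN]⟩
  · have hrels :=
      g18Relations_mk.lift_g18ExtRels_eq_one mk_glT_pow_three mk_glT_conj_glA mk_glT_conj_glB
    exact ⟨PresentedGroup.toGroup hrels, PresentedGroup.toGroup.of hrels,
      PresentedGroup.toGroup.of hrels, PresentedGroup.toGroup.of hrels,
      PresentedGroup.toGroup.of hrels⟩
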